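/- arXiv:2208.06058 — 5 statements merged into one kernel-verified Lean document; each statement's English description precedes it below -/
import Mathlib

section
/- Let E be a finite-dimensional real inner product space, Ω : E → ℝ a convex function, η > 0, and p : E → E a proximal map of Ω with step η. Let ι be a nonempty finite index set and v : ι → E a family of vectors with average ḡ = (1/|ι|) Σ_{i∈ι} v_i. Then for every x, w ∈ E, (1/|ι|) Σ_{i∈ι} ⟨v_i − ḡ, w − p(x − η v_i)⟩ ≤ η · (1/|ι|) Σ_{i∈ι} ‖v_i − ḡ‖². (This is Lemma 1 of the paper; there it is applied with w = x* a minimizer and ḡ = ∇F(x^{t−1}).) -/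
open RealInnerProductSpace Finset

lemma adsgd_prox_subgrad {E : Type*} [NormedAddCommGroup E] [InnerProductSpace ℝ E]
    (Ω : E → ℝ) (hΩ : ConvexOn ℝ Set.univ Ω)
    (η : ℝ) (hη : 0 < η)
    (y P : E)
    (hp : ∀ z : E, (1 / (2 * η)) * ‖P - y‖ ^ 2 + Ω P ≤
      (1 / (2 * η)) * ‖z - y‖ ^ 2 + Ω z)
    (z : E) : ⟪y - P, z - P⟫ ≤ η * (Ω z - Ω P) := by
  set K : ℝ := ⟪P - y, z - P⟫ + η * (Ω z - Ω P) with hK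
  set M : ℝ := (1 / 2) * ‖z - P‖ ^ 2 with hM
  have hM0 : 0 ≤ M := by positivity
  have key : ∀ t : ℝ, 0 < t → t ≤ 1 → 0 ≤ K + t * M := by
    intro t ht ht1
    have h1 := hp (P + t • (z - P))
    have hconv := hΩ.2 (Set.mem_univ P) (Set.mem_univ z) (by linarith : (0:ℝ) ≤ 1 - t)
      (le_of_lt ht) (by ring)
    have hΩle : Ω (P + t • (z - P)) ≤ Ω P + t * (Ω z - Ω P) := by
      have hcomb : (1 - t) • P + t • z = P + t • (z - P) := by
        rw [sub_smul, one_smul, smul_sub]; abel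
      rw [hcomb] at hconv
      simp only [smul_eq_mul] at hconv
      linarith
    have hnorm : ‖P + t • (z - P) - y‖ ^ 2
        = ‖P - y‖ ^ 2 + 2 * t * ⟪P - y, z - P⟫ + t ^ 2 * ‖z - P‖ ^ 2 := by
      have hre : P + t • (z - P) - y = (P - y) + t • (z - P) := by abel
      rw [hre, norm_add_sq_real, real_inner_smul_right, norm_smul]
      simp [abs_of_pos ht, mul_pow]
      ring
    rw [hnorm] at h1
    have h3 : 0 ≤ (1 / (2 * η)) * (2 * t * ⟪P - y, z - P⟫ + t ^ 2 * ‖z - P‖ ^ 2)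
        + t * (Ω z - Ω P) := by nlinarith [h1, hΩle]
    have e : (2*η) * ((1/(2*η)) * (2 * t * ⟪P - y, z - P⟫ + t ^ 2 * ‖z - P‖ ^ 2)
        + t * (Ω z - Ω P))
        = 2 * t * ⟪P - y, z - P⟫ + t ^ 2 * ‖z - P‖ ^ 2 + 2 * η * (t * (Ω z - Ω P)) := by
      field_simp
    have h4 : 0 ≤ 2 * t * ⟪P - y, z - P⟫ + t ^ 2 * ‖z - P‖ ^ 2
        + 2 * η * (t * (Ω z - Ω P)) := by
      have := mul_le_mul_of_nonneg_left h3 (by positivity : (0:ℝ) ≤ 2*η)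
      linarith [e ▸ this]
    have h5 : 0 ≤ t * (K + t * M) := by rw [hK, hM]; nlinarith [h4]
    have h6 : 0 ≤ (t * (K + t * M)) / t := div_nonneg h5 ht.le
    rwa [mul_div_cancel_left₀ _ (ne_of_gt ht)] at h6
  have hK0 : 0 ≤ K := by
    by_contra h
    push_neg at h
    set t : ℝ := min 1 (-K / (M + 1)) with htdef
    have htpos : 0 < t := by
      apply lt_min one_pos
      apply div_pos (by linarith) (by linarith)
    have ht1 : t ≤ 1 := min_le_left _ _
    have h2 := key t htpos ht1
    have htM : t * M ≤ (-K / (M + 1)) * M :=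
      mul_le_mul_of_nonneg_right (min_le_right _ _) hM0
    have : (-K / (M + 1)) * M < -K := by
      rw [div_mul_eq_mul_div, div_lt_iff₀ (by linarith)]
      nlinarith
    linarith
  have hneg : ⟪y - P, z - P⟫ = -⟪P - y, z - P⟫ := by
    rw [← inner_neg_left]; simp
  rw [hneg]; linarith

lemma adsgd_prox_nonexp {E : Type*} [NormedAddCommGroup E] [InnerProductSpace ℝ E]
    (Ω : E → ℝ) (hΩ : ConvexOn ℝ Set.univ Ω)
    (η : ℝ) (hη : 0 < η)
    (p : E → E)
    (hp : ∀ y z : E, (1 / (2 * η)) * ‖p y - y‖ ^ 2 + Ω (p y) ≤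
      (1 / (2 * η)) * ‖z - y‖ ^ 2 + Ω z)
    (y1 y2 : E) : ‖p y1 - p y2‖ ≤ ‖y1 - y2‖ := by
  have h1 := adsgd_prox_subgrad Ω hΩ η hη y1 (p y1) (hp y1) (p y2)
  have h2 := adsgd_prox_subgrad Ω hΩ η hη y2 (p y2) (hp y2) (p y1)
  have h3 : 0 ≤ ⟪(y1 - y2) - (p y1 - p y2), p y1 - p y2⟫ := by
    have e : (y1 - y2) - (p y1 - p y2) = (y1 - p y1) - (y2 - p y2) := by abel
    rw [e, inner_sub_left]
    have e1 : ⟪y1 - p y1, p y1 - p y2⟫ = -⟪y1 - p y1, p y2 - p y1⟫ := by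
      rw [← inner_neg_right, neg_sub]
    rw [e1]
    linarith
  rw [inner_sub_left, real_inner_self_eq_norm_sq] at h3
  have h4 : ‖p y1 - p y2‖ ^ 2 ≤ ‖y1 - y2‖ * ‖p y1 - p y2‖ :=
    le_trans (by linarith) (real_inner_le_norm _ _)
  by_cases hd : ‖p y1 - p y2‖ = 0
  · rw [hd]; exact norm_nonneg _
  · have hdpos : 0 < ‖p y1 - p y2‖ := lt_of_le_of_ne (norm_nonneg _) (Ne.symm hd)
    nlinarith

/-- Lemma 1 of the paper: variance-transfer inequality for the proximal map. -/
theorem adsgd_lemma1 {E : Type*} [NormedAddCommGroup E] [InnerProductSpace ℝ E]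
    [FiniteDimensional ℝ E]
    (Ω : E → ℝ) (hΩ : ConvexOn ℝ Set.univ Ω)
    (η : ℝ) (hη : 0 < η)
    (p : E → E)
    (hp : ∀ y z : E, (1 / (2 * η)) * ‖p y - y‖ ^ 2 + Ω (p y) ≤
      (1 / (2 * η)) * ‖z - y‖ ^ 2 + Ω z)
    {ι : Type*} [Fintype ι] [Nonempty ι]
    (v : ι → E) (g : E)
    (hg : g = (Fintype.card ι : ℝ)⁻¹ • ∑ i, v i)
    (x w : E) :
    (Fintype.card ι : ℝ)⁻¹ * ∑ i, ⟪v i - g, w - p (x - η • v i)⟫ ≤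
      η * ((Fintype.card ι : ℝ)⁻¹ * ∑ i, ‖v i - g‖ ^ 2) := by
  set q : E := p (x - η • g) with hq
  have hcard : (Fintype.card ι : ℝ) ≠ 0 := Nat.cast_ne_zero.2 Fintype.card_ne_zero
  have hsumv : ∑ i, v i = (Fintype.card ι : ℝ) • g := by
    rw [hg, smul_smul, mul_inv_cancel₀ hcard, one_smul]
  have hzero : ∑ i, (v i - g) = 0 := by
    rw [Finset.sum_sub_distrib, hsumv, Finset.sum_const, Finset.card_univ, sub_eq_zero,
      Nat.cast_smul_eq_nsmul ℝ]
  have hzinner : ∑ i, ⟪v i - g, w - q⟫ = 0 := by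
    rw [← sum_inner, hzero, inner_zero_left]
  have hbound : ∀ i : ι, ⟪v i - g, w - p (x - η • v i)⟫
      ≤ ⟪v i - g, w - q⟫ + η * ‖v i - g‖ ^ 2 := by
    intro i
    have hsplit : (w - p (x - η • v i)) = (w - q) + (q - p (x - η • v i)) := by abel
    rw [hsplit, inner_add_right]
    have h1 : ⟪v i - g, q - p (x - η • v i)⟫ ≤ ‖v i - g‖ * ‖q - p (x - η • v i)‖ :=
      real_inner_le_norm _ _
    have h2 : ‖q - p (x - η • v i)‖ ≤ ‖(x - η • g) - (x - η • v i)‖ :=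
      adsgd_prox_nonexp Ω hΩ η hη p hp _ _
    have h3 : ‖(x - η • g) - (x - η • v i)‖ = η * ‖v i - g‖ := by
      have : (x - η • g) - (x - η • v i) = η • (v i - g) := by
        rw [smul_sub]; abel
      rw [this, norm_smul, Real.norm_eq_abs, abs_of_pos hη]
    have h4 : ⟪v i - g, q - p (x - η • v i)⟫ ≤ η * ‖v i - g‖ ^ 2 := by
      calc ⟪v i - g, q - p (x - η • v i)⟫ ≤ ‖v i - g‖ * ‖q - p (x - η • v i)‖ := h1
        _ ≤ ‖v i - g‖ * (η * ‖v i - g‖) := by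
            rw [← h3]; exact mul_le_mul_of_nonneg_left h2 (norm_nonneg _)
        _ = η * ‖v i - g‖ ^ 2 := by ring
    linarith
  have hsum : ∑ i, ⟪v i - g, w - p (x - η • v i)⟫
      ≤ η * ∑ i, ‖v i - g‖ ^ 2 := by
    calc ∑ i, ⟪v i - g, w - p (x - η • v i)⟫
        ≤ ∑ i, (⟪v i - g, w - q⟫ + η * ‖v i - g‖ ^ 2) :=
          Finset.sum_le_sum fun i _ => hbound i
      _ = ∑ i, ⟪v i - g, w - q⟫ + η * ∑ i, ‖v i - g‖ ^ 2 := by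
          rw [Finset.sum_add_distrib, Finset.mul_sum]
      _ = η * ∑ i, ‖v i - g‖ ^ 2 := by rw [hzinner, zero_add]
  have hcpos : (0:ℝ) ≤ (Fintype.card ι : ℝ)⁻¹ := by positivity
  have := mul_le_mul_of_nonneg_left hsum hcpos
  linarith [this]
end

section
/- In the block setting on ℝᵈ = EuclideanSpace ℝ (Fin d) with q blocks, let F : ℝᵈ → ℝ be convex and differentiable with blockwise L-Lipschitz gradients, i.e. for every x, every block j, and every h with proj_j h = h one has ‖proj_j(∇F(x+h) − ∇F(x))‖ ≤ L‖h‖. Let Ω(x) = Σ_{j∈Fin q} ω_j(proj_j x) with each ω_j : ℝᵈ → ℝ convex and satisfying ω_j(z) = ω_j(proj_j z). Let P = F + Ω, let x* be a minimizer of P, let 0 < η ≤ 1/L, let p be a proximal map of Ω with step η, and for v, x ∈ ℝᵈ set x̄ = p(x − η v), δ = (x̄ − x)/η and δ_j = proj_j δ. Then (1/q) Σ_{j} [⟨x − x*, δ_j⟩ + (η/2)‖δ_j‖²] ≤ (1/q) P(x*) + ((q−1)/q) P(x) − (1/q) Σ_{j} P(x + η δ_j) + (1/q) ⟨v − ∇F(x),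 x* − x̄⟩. -/
open RealInnerProductSpace Finset

/-- Block-`j` restriction of a vector: keep the coordinates assigned to block `j`
by the block assignment `β`, zero elsewhere. -/
noncomputable def blockProj {d q : ℕ} (β : Fin d → Fin q) (j : Fin q)
    (x : EuclideanSpace ℝ (Fin d)) : EuclideanSpace ℝ (Fin d) :=
  WithLp.toLp 2 (fun i => if β i = j then x i else 0)

section helpers
variable {d q : ℕ} (β : Fin d → Fin q)

lemma blockProj_add (j : Fin q) (a b : EuclideanSpace ℝ (Fin d)) :
    blockProj β j (a + b) = blockProj β j a + blockProj β j b := by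
  ext i
  simp only [blockProj, PiLp.add_apply, PiLp.toLp_apply]
  split <;> simp

lemma blockProj_smul (j : Fin q) (t : ℝ) (a : EuclideanSpace ℝ (Fin d)) :
    blockProj β j (t • a) = t • blockProj β j a := by
  ext i
  simp only [blockProj, PiLp.smul_apply, smul_eq_mul, PiLp.toLp_apply]
  split <;> simp

lemma sum_blockProj (w : EuclideanSpace ℝ (Fin d)) :
    ∑ j, blockProj β j w = w := by
  ext i
  rw [WithLp.ofLp_sum, Finset.sum_apply]
  simp [blockProj]

lemma inner_blockProj_left (j : Fin q) (a b : EuclideanSpace ℝ (Fin d)) :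
    ⟪blockProj β j a, b⟫ = ⟪blockProj β j a, blockProj β j b⟫ := by
  simp only [PiLp.inner_apply, RCLike.inner_apply, conj_trivial, blockProj, PiLp.toLp_apply]
  refine Finset.sum_congr rfl fun i _ => ?_
  split <;> simp

lemma inner_blockProj_right (j : Fin q) (a b : EuclideanSpace ℝ (Fin d)) :
    ⟪a, blockProj β j b⟫ = ⟪blockProj β j a, blockProj β j b⟫ := by
  rw [real_inner_comm, inner_blockProj_left, real_inner_comm]

lemma blockProj_idem (j : Fin q) (a : EuclideanSpace ℝ (Fin d)) :
    blockProj β j (blockProj β j a) = blockProj β j a := by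
  ext i; simp only [blockProj, PiLp.toLp_apply]; split <;> simp_all

lemma blockProj_ne (j k : Fin q) (hjk : k ≠ j) (a : EuclideanSpace ℝ (Fin d)) :
    blockProj β k (blockProj β j a) = 0 := by
  ext i
  simp only [blockProj, PiLp.toLp_apply]
  split
  · rename_i h; rw [if_neg]; rfl
    rintro rfl; exact hjk h.symm
  · rfl

end helpers

section calc1
variable {d q : ℕ} {β : Fin d → Fin q} {F : EuclideanSpace ℝ (Fin d) → ℝ} {L : ℝ}

lemma line_hasDerivAt (hFdiff : Differentiable ℝ F) (u w : EuclideanSpace ℝ (Fin d)) (t : ℝ) :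
    HasDerivAt (fun s : ℝ => F (u + s • w)) ⟪gradient F (u + t • w), w⟫ t := by
  have h1 : HasFDerivAt F (InnerProductSpace.toDual ℝ _ (gradient F (u + t • w))) (u + t • w) :=
    hasGradientAt_iff_hasFDerivAt.1 (hFdiff _).hasGradientAt
  have h2 : HasDerivAt (fun s : ℝ => u + s • w) w t := by
    simpa using ((hasDerivAt_id t).smul_const w).const_add u
  have := h1.comp_hasDerivAt t h2
  simpa [InnerProductSpace.toDual_apply_apply, Function.comp_def] using this

lemma conv_grad (hFconv : ConvexOn ℝ Set.univ F) (hFdiff : Differentiable ℝ F)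
    (y z : EuclideanSpace ℝ (Fin d)) :
    F y + ⟪gradient F y, z - y⟫ ≤ F z := by
  set φ : ℝ → ℝ := fun t => F (y + t • (z - y)) with hφ
  have hconv : ConvexOn ℝ Set.univ φ := by
    have := hFconv.comp_affineMap (AffineMap.lineMap y z)
    have heq : (F ∘ (AffineMap.lineMap y z : ℝ →ᵃ[ℝ] _)) = φ := by
      funext t
      simp [φ, AffineMap.lineMap_apply, vsub_eq_sub, vadd_eq_add]
      rw [add_comm]
    rw [heq] at this
    simpa using this
  have hd : HasDerivAt φ ⟪gradient F y, z - y⟫ 0 := by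
    have := line_hasDerivAt hFdiff y (z - y) 0
    simpa using this
  have := hconv.deriv_le_slope (Set.mem_univ (0:ℝ)) (Set.mem_univ 1) one_pos hd.differentiableAt
  rw [hd.deriv] at this
  have hs : slope φ 0 1 = F z - F y := by
    simp [slope, φ]
  rw [hs] at this
  linarith

lemma descent (hFdiff : Differentiable ℝ F)
    (hblip : ∀ (x h : EuclideanSpace ℝ (Fin d)) (j : Fin q), blockProj β j h = h →
      ‖blockProj β j (gradient F (x + h) - gradient F x)‖ ≤ L * ‖h‖)
    (x h : EuclideanSpace ℝ (Fin d)) (j : Fin q) (hh : blockProj β j h = h) :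
    F (x + h) ≤ F x + ⟪gradient F x, h⟫ + L / 2 * ‖h‖ ^ 2 := by
  set g := gradient F x with hg
  set ψ : ℝ → ℝ := fun t => F (x + t • h) - t * ⟪g, h⟫ - L / 2 * ‖h‖ ^ 2 * t ^ 2 with hψdef
  have hψ : ∀ t : ℝ, HasDerivAt ψ
      (⟪gradient F (x + t • h), h⟫ - ⟪g, h⟫ - L / 2 * ‖h‖ ^ 2 * (↑2 * t ^ 1)) t := by
    intro t
    exact ((line_hasDerivAt hFdiff x h t).sub (hasDerivAt_mul_const ⟪g, h⟫)).sub
      ((hasDerivAt_pow 2 t).const_mul (L / 2 * ‖h‖ ^ 2))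
  have hdiff : Differentiable ℝ ψ := fun t => (hψ t).differentiableAt
  have hant : AntitoneOn ψ (Set.Icc 0 1) := by
    apply antitoneOn_of_deriv_nonpos (convex_Icc 0 1) hdiff.continuous.continuousOn
      hdiff.differentiableOn
    intro t ht
    rw [interior_Icc] at ht
    rw [(hψ t).deriv]
    have hc : ⟪gradient F (x + t • h) - g, h⟫ ≤ (L * ‖t • h‖) * ‖h‖ := by
      have e1 : ⟪gradient F (x + t • h) - g, h⟫
          = ⟪blockProj β j (gradient F (x + t • h) - g), h⟫ := by
        rw [← hh, inner_blockProj_right, inner_blockProj_left, inner_blockProj_left, hh]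
      rw [e1]
      calc ⟪blockProj β j (gradient F (x + t • h) - g), h⟫
          ≤ ‖blockProj β j (gradient F (x + t • h) - g)‖ * ‖h‖ := real_inner_le_norm _ _
        _ ≤ (L * ‖t • h‖) * ‖h‖ := by
            apply mul_le_mul_of_nonneg_right _ (norm_nonneg h)
            exact hblip x (t • h) j (by rw [blockProj_smul, hh])
    rw [norm_smul] at hc
    rw [inner_sub_left] at hc
    have habs : |t| = t := abs_of_pos ht.1
    rw [Real.norm_eq_abs, habs] at hc
    nlinarith [hc]
  have h01 := hant (Set.mem_Icc.2 ⟨le_refl 0, zero_le_one⟩)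
    (Set.mem_Icc.2 ⟨zero_le_one, le_refl 1⟩) zero_le_one
  have e0 : ψ 0 = F x := by simp [hψdef]
  have e1 : ψ 1 = F (x + h) - ⟪g, h⟫ - L / 2 * ‖h‖ ^ 2 := by simp [hψdef]
  rw [e0, e1] at h01
  linarith

lemma prox_ineq {Ω : EuclideanSpace ℝ (Fin d) → ℝ} (hΩconv : ConvexOn ℝ Set.univ Ω)
    {η : ℝ} (hη : 0 < η) {p : EuclideanSpace ℝ (Fin d) → EuclideanSpace ℝ (Fin d)}
    (hp : ∀ y z, (1 / (2 * η)) * ‖p y - y‖ ^ 2 + Ω (p y) ≤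
      (1 / (2 * η)) * ‖z - y‖ ^ 2 + Ω z)
    (y z : EuclideanSpace ℝ (Fin d)) :
    Ω (p y) ≤ Ω z + η⁻¹ * ⟪p y - y, z - p y⟫ := by
  set w := p y with hw
  set I : ℝ := ⟪w - y, z - w⟫ with hI
  set N : ℝ := ‖z - w‖ ^ 2 with hN
  have hNnn : 0 ≤ N := by positivity
  have key : ∀ t : ℝ, 0 < t → t ≤ 1 → 0 ≤ η⁻¹ * I + Ω z - Ω w + t * ((1 / (2 * η)) * N) := by
    intro t ht ht1
    have h1 := hp y (w + t • (z - w))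
    have e1 : w + t • (z - w) - y = (w - y) + t • (z - w) := by abel
    have e2 : ‖(w - y) + t • (z - w)‖ ^ 2 = ‖w - y‖ ^ 2 + 2 * (t * I) + t ^ 2 * N := by
      rw [norm_add_sq_real, real_inner_smul_right, norm_smul, Real.norm_eq_abs,
        abs_of_pos ht, mul_pow, hI, hN]
    have e3 : Ω (w + t • (z - w)) ≤ (1 - t) * Ω w + t * Ω z := by
      have hcomb : (1 - t) • w + t • z = w + t • (z - w) := by
        rw [smul_sub, sub_smul, one_smul]; abel
      have := hΩconv.2 (Set.mem_univ w) (Set.mem_univ z)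
        (show (0:ℝ) ≤ 1 - t by linarith) ht.le (show (1 - t) + t = 1 by ring)
      rw [hcomb] at this
      simpa [smul_eq_mul] using this
    rw [e1, e2] at h1
    have h2 : 0 ≤ t * (η⁻¹ * I + Ω z - Ω w + t * ((1 / (2 * η)) * N)) := by
      have hηne : η ≠ 0 := hη.ne'
      have expand : t * (η⁻¹ * I + Ω z - Ω w + t * ((1 / (2 * η)) * N))
          = (1 / (2 * η)) * (2 * (t * I) + t ^ 2 * N) + (t * Ω z - t * Ω w) := by
        field_simp
        ring
      rw [expand]
      linarith
    exact nonneg_of_mul_nonneg_right h2 ht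
  have main : 0 ≤ η⁻¹ * I + Ω z - Ω w := by
    have B := (1 / (2 * η)) * N
    have hB : 0 ≤ (1 / (2 * η)) * N := by positivity
    have h3 : ∀ ε : ℝ, 0 < ε → -(η⁻¹ * I + Ω z - Ω w) ≤ 0 + ε := by
      intro ε hε
      set t : ℝ := min 1 (ε / ((1 / (2 * η)) * N + 1)) with htdef
      have htpos : 0 < t := lt_min one_pos (by positivity)
      have ht1 : t ≤ 1 := min_le_left _ _
      have h4 := key t htpos ht1
      have h5 : t * ((1 / (2 * η)) * N) ≤ ε := by
        calc t * ((1 / (2 * η)) * N) ≤ (ε / ((1 / (2 * η)) * N + 1)) * ((1 / (2 * η)) * N) := by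
              apply mul_le_mul_of_nonneg_right (min_le_right _ _) hB
          _ ≤ ε := by
              rw [div_mul_eq_mul_div, div_le_iff₀ (by positivity)]
              nlinarith
      linarith
    linarith [le_of_forall_pos_le_add h3]
  linarith

end calc1

/-- Lemma 3 of the paper (block descent lemma for the proximal step). -/
theorem adsgd_lemma3 {d q : ℕ} (hd : 0 < d) (hq : 0 < q) (β : Fin d → Fin q)
    (F : EuclideanSpace ℝ (Fin d) → ℝ)
    (hFconv : ConvexOn ℝ Set.univ F) (hFdiff : Differentiable ℝ F)
    (L : ℝ)
    (hblip : ∀ (x h : EuclideanSpace ℝ (Fin d)) (j : Fin q), blockProj β j h = h →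
      ‖blockProj β j (gradient F (x + h) - gradient F x)‖ ≤ L * ‖h‖)
    (ω : Fin q → EuclideanSpace ℝ (Fin d) → ℝ)
    (hωconv : ∀ j, ConvexOn ℝ Set.univ (ω j))
    (hωblock : ∀ j z, ω j z = ω j (blockProj β j z))
    (Ω : EuclideanSpace ℝ (Fin d) → ℝ)
    (hΩ : Ω = fun x => ∑ j, ω j (blockProj β j x))
    (P : EuclideanSpace ℝ (Fin d) → ℝ) (hP : P = fun x => F x + Ω x)
    (xstar : EuclideanSpace ℝ (Fin d)) (hmin : ∀ y, P xstar ≤ P y)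
    (η : ℝ) (hη : 0 < η) (hηL : η ≤ 1 / L)
    (p : EuclideanSpace ℝ (Fin d) → EuclideanSpace ℝ (Fin d))
    (hp : ∀ y z, (1 / (2 * η)) * ‖p y - y‖ ^ 2 + Ω (p y) ≤
      (1 / (2 * η)) * ‖z - y‖ ^ 2 + Ω z)
    (v x xb δ : EuclideanSpace ℝ (Fin d))
    (hxb : xb = p (x - η • v)) (hδ : δ = η⁻¹ • (xb - x)) :
    (q : ℝ)⁻¹ * ∑ j, (⟪x - xstar, blockProj β j δ⟫ + (η / 2) * ‖blockProj β j δ‖ ^ 2) ≤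
      (q : ℝ)⁻¹ * P xstar + ((q - 1 : ℝ) / q) * P x
        - (q : ℝ)⁻¹ * ∑ j, P (x + η • blockProj β j δ)
        + (q : ℝ)⁻¹ * ⟪v - gradient F x, xstar - xb⟫ := by
  -- basic positivity facts
  have hL : 0 < L := by
    by_contra hcon
    push_neg at hcon
    have h1 : 1 / L ≤ 0 := by
      rcases hcon.lt_or_eq with h | h
      · exact le_of_lt (div_neg_of_pos_of_neg one_pos h)
      · simp [h]
    linarith
  have hηL1 : η * L ≤ 1 := by
    rw [le_div_iff₀ hL] at hηL; linarith
  have hqpos : (0 : ℝ) < q := by exact_mod_cast hq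
  -- notation
  set g := gradient F x with hg
  -- xb = x + η • δ
  have hxbe : xb = x + η • δ := by
    rw [hδ, smul_smul, mul_inv_cancel₀ hη.ne', one_smul]
    abel
  -- Ω is convex
  have hΩconv : ConvexOn ℝ Set.univ Ω := by
    rw [hΩ]
    refine ⟨convex_univ, fun a _ b _ s t hs ht hst => ?_⟩
    simp only [smul_eq_mul, Finset.mul_sum, ← Finset.sum_add_distrib]
    refine Finset.sum_le_sum fun j _ => ?_
    rw [blockProj_add, blockProj_smul, blockProj_smul]
    have := (hωconv j).2 (Set.mem_univ (blockProj β j a)) (Set.mem_univ (blockProj β j b))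
      hs ht hst
    simpa [smul_eq_mul] using this
  -- sum identities
  have hsumδ : ∑ j, blockProj β j δ = δ := sum_blockProj β δ
  have hsum1 : ∑ j, ⟪g, blockProj β j δ⟫ = ⟪g, δ⟫ := by
    rw [← inner_sum, hsumδ]
  have hsum3 : ∑ j, ⟪x - xstar, blockProj β j δ⟫ = ⟪x - xstar, δ⟫ := by
    rw [← inner_sum, hsumδ]
  have hsq : ∀ j, ‖blockProj β j δ‖ ^ 2 = ⟪blockProj β j δ, δ⟫ := by
    intro j
    exact (real_inner_self_eq_norm_sq _).symm.trans (inner_blockProj_left β j δ δ).symm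
  have hsum2 : ∑ j, ‖blockProj β j δ‖ ^ 2 = ‖δ‖ ^ 2 := by
    simp_rw [hsq]
    rw [← sum_inner, hsumδ, real_inner_self_eq_norm_sq]
  have hsumωx : ∑ j, ω j (blockProj β j x) = Ω x := by rw [hΩ]
  have hsumωxb : ∑ j, ω j (blockProj β j xb) = Ω xb := by rw [hΩ]
  -- per-block bound
  have B : ∀ j, P (x + η • blockProj β j δ) ≤ F x + η * ⟪g, blockProj β j δ⟫
      + η / 2 * ‖blockProj β j δ‖ ^ 2
      + (Ω x - ω j (blockProj β j x) + ω j (blockProj β j xb)) := by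
    intro j
    have hhj : blockProj β j (η • blockProj β j δ) = η • blockProj β j δ := by
      rw [blockProj_smul, blockProj_idem]
    -- F part
    have hF : F (x + η • blockProj β j δ) ≤ F x + η * ⟪g, blockProj β j δ⟫
        + η / 2 * ‖blockProj β j δ‖ ^ 2 := by
      have := descent hFdiff hblip x (η • blockProj β j δ) j hhj
      rw [real_inner_smul_right, norm_smul, Real.norm_eq_abs, abs_of_pos hη, mul_pow] at this
      rw [← hg] at this
      have hstep : L / 2 * (η ^ 2 * ‖blockProj β j δ‖ ^ 2) ≤ η / 2 * ‖blockProj β j δ‖ ^ 2 := by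
        nlinarith [mul_nonneg hη.le (sq_nonneg ‖blockProj β j δ‖)]
      linarith
    -- Ω part
    have hΩpart : Ω (x + η • blockProj β j δ)
        = Ω x - ω j (blockProj β j x) + ω j (blockProj β j xb) := by
      rw [hΩ]
      have hterm : ∀ k : Fin q, ω k (blockProj β k (x + η • blockProj β j δ))
          = ω k (blockProj β k x) + (if k = j then ω j (blockProj β j xb) - ω j (blockProj β j x) else 0) := by
        intro k
        rw [blockProj_add, blockProj_smul]
        by_cases hk : k = j
        · subst hk
          rw [blockProj_idem, if_pos rfl]
          have : blockProj β k x + η • blockProj β k δ = blockProj β k xb := by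
            rw [hxbe, blockProj_add, blockProj_smul]
          rw [this]
          ring
        · rw [blockProj_ne β j k hk, if_neg hk]
          simp
      simp_rw [hterm]
      rw [Finset.sum_add_distrib, Finset.sum_ite_eq' Finset.univ j
        (fun _ => ω j (blockProj β j xb) - ω j (blockProj β j x))]
      simp only [Finset.mem_univ, if_pos]
      ring
    rw [hP]
    simp only
    rw [hΩpart]
    linarith
  -- summed bound
  have SB : ∑ j, P (x + η • blockProj β j δ) ≤ (q : ℝ) * F x + η * ⟪g, δ⟫
      + η / 2 * ‖δ‖ ^ 2 + ((q : ℝ) * Ω x - Ω x + Ω xb) := by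
    calc ∑ j, P (x + η • blockProj β j δ)
        ≤ ∑ j, (F x + η * ⟪g, blockProj β j δ⟫ + η / 2 * ‖blockProj β j δ‖ ^ 2
            + (Ω x - ω j (blockProj β j x) + ω j (blockProj β j xb))) :=
          Finset.sum_le_sum fun j _ => B j
      _ = (q : ℝ) * F x + η * ⟪g, δ⟫ + η / 2 * ‖δ‖ ^ 2 + ((q : ℝ) * Ω x - Ω x + Ω xb) := by
          simp only [Finset.sum_add_distrib, Finset.sum_sub_distrib, Finset.sum_const,
            Finset.card_univ, Fintype.card_fin, nsmul_eq_mul, ← Finset.mul_sum]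
          rw [hsum1, hsum2, hsumωx, hsumωxb]
  -- convexity of F
  have hcv : F x + ⟪g, xstar - x⟫ ≤ F xstar := conv_grad hFconv hFdiff x xstar
  -- prox inequality
  have hprox : Ω xb ≤ Ω xstar + ⟪δ + v, xstar - xb⟫ := by
    have := prox_ineq hΩconv hη hp (x - η • v) xstar
    rw [← hxb] at this
    have e : η⁻¹ * ⟪xb - (x - η • v), xstar - xb⟫ = ⟪δ + v, xstar - xb⟫ := by
      have e2 : xb - (x - η • v) = η • (δ + v) := by
        rw [hxbe]; rw [smul_add]; abel
      rw [e2, real_inner_smul_left]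
      field_simp
    rw [e] at this
    exact this
  -- inner-product algebra
  have hinner : ⟪g, xstar - x⟫ - η * ⟪g, δ⟫ - ⟪δ + v, xstar - xb⟫ + ⟪v - g, xstar - xb⟫
      = ⟪x - xstar, δ⟫ + η * ‖δ‖ ^ 2 := by
    rw [hxbe]
    simp only [inner_sub_left, inner_add_left, inner_sub_right, inner_add_right,
      real_inner_smul_right, real_inner_self_eq_norm_sq]
    rw [real_inner_comm δ x, real_inner_comm δ xstar]
    ring
  -- the key inequality (before dividing by q)
  have key : (∑ j, (⟪x - xstar, blockProj β j δ⟫ + (η / 2) * ‖blockProj β j δ‖ ^ 2))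
      ≤ P xstar + ((q : ℝ) - 1) * P x - (∑ j, P (x + η • blockProj β j δ))
        + ⟪v - g, xstar - xb⟫ := by
    have lhs_eq : (∑ j, (⟪x - xstar, blockProj β j δ⟫ + (η / 2) * ‖blockProj β j δ‖ ^ 2))
        = ⟪x - xstar, δ⟫ + η / 2 * ‖δ‖ ^ 2 := by
      rw [Finset.sum_add_distrib, hsum3, ← Finset.mul_sum, hsum2]
    rw [lhs_eq]
    have e2 : ((q : ℝ) - 1) * P x = (q : ℝ) * F x + (q : ℝ) * Ω x - F x - Ω x := by
      simp only [hP]; ring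
    have hPs : P xstar = F xstar + Ω xstar := by simp [hP]
    have hpos : 0 ≤ η / 2 * ‖δ‖ ^ 2 := by positivity
    linarith [SB, hcv, hprox, hinner]
  have hinv : (0 : ℝ) ≤ (q : ℝ)⁻¹ := by positivity
  have hm := mul_le_mul_of_nonneg_left key hinv
  have efin : (q : ℝ)⁻¹ * (P xstar + ((q : ℝ) - 1) * P x - (∑ j, P (x + η • blockProj β j δ))
        + ⟪v - g, xstar - xb⟫)
      = (q : ℝ)⁻¹ * P xstar + ((q - 1 : ℝ) / q) * P x
        - (q : ℝ)⁻¹ * ∑ j, P (x + η • blockProj β j δ)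
        + (q : ℝ)⁻¹ * ⟪v - g, xstar - xb⟫ := by
    field_simp
    try ring
  rw [efin] at hm
  exact hm
end

section
/- Let A : ℝᵈ → ℝⁿ be a linear map between Euclidean spaces, G : ℝⁿ → ℝ differentiable with T-Lipschitz gradient, Ω : ℝᵈ → ℝ convex, P(x) = G(A x) + Ω(x), and let x* be a minimizer of P over ℝᵈ. Then for all x̂, u ∈ ℝᵈ and all s ∈ [0, 1]: P(x̂) − P(x*) ≥ s (Ω(x̂) − Ω(u) − ⟨∇G(A x̂), A(u − x̂)⟩) − (T s²/2) ‖A(u − x̂)‖². -/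
open RealInnerProductSpace Finset

lemma descent_lemma {n : ℕ} (G : EuclideanSpace ℝ (Fin n) → ℝ)
    (hGdiff : Differentiable ℝ G) (T : ℝ)
    (hlip : ∀ y y', ‖gradient G y - gradient G y'‖ ≤ T * ‖y - y'‖)
    (x v : EuclideanSpace ℝ (Fin n)) :
    G (x + v) ≤ G x + ⟪gradient G x, v⟫ + T / 2 * ‖v‖ ^ 2 := by
  -- gradient is continuous
  have hcont : Continuous (gradient G) := by
    have : LipschitzWith (Real.toNNReal T) (gradient G) := by
      apply LipschitzWith.of_dist_le_mul
      intro y y'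
      simp only [dist_eq_norm]
      calc ‖gradient G y - gradient G y'‖ ≤ T * ‖y - y'‖ := hlip y y'
        _ ≤ Real.toNNReal T * ‖y - y'‖ :=
            mul_le_mul_of_nonneg_right (Real.le_coe_toNNReal T) (norm_nonneg _)
    exact this.continuous
  set φ' : ℝ → ℝ := fun t => ⟪gradient G (x + t • v), v⟫ with hφ'
  have hderiv : ∀ t ∈ Set.uIcc (0 : ℝ) 1,
      HasDerivAt (fun t : ℝ => G (x + t • v)) (φ' t) t := by
    intro t _
    have h1 : HasDerivAt (fun t : ℝ => x + t • v) v t := by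
      simpa using ((hasDerivAt_id t).smul_const v).const_add x
    have h2 := ((hGdiff (x + t • v)).hasGradientAt.hasFDerivAt).comp_hasDerivAt t h1
    simp [hφ', InnerProductSpace.toDual_apply_apply] at h2 ⊢; exact h2
  have hcont' : Continuous φ' := by
    apply Continuous.inner
    · exact hcont.comp (continuous_const.add (continuous_id.smul continuous_const))
    · exact continuous_const
  have hint : IntervalIntegrable φ' MeasureTheory.volume 0 1 :=
    hcont'.intervalIntegrable 0 1
  have heq : ∫ t in (0:ℝ)..1, φ' t = G (x + v) - G x := by
    have := intervalIntegral.integral_eq_sub_of_hasDerivAt hderiv hint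
    simpa using this
  have hc : Continuous (fun t : ℝ => T * t * ‖v‖ ^ 2) := by fun_prop
  have hbound : ∫ t in (0:ℝ)..1, φ' t ≤ ∫ t in (0:ℝ)..1, (⟪gradient G x, v⟫ + T * t * ‖v‖ ^ 2) := by
    apply intervalIntegral.integral_mono_on (by norm_num) hint
    · apply IntervalIntegrable.add intervalIntegrable_const
      exact (hc.intervalIntegrable _ _)
    · intro t ht
      have h1 : φ' t - ⟪gradient G x, v⟫ = ⟪gradient G (x + t • v) - gradient G x, v⟫ := by
        simp [hφ', inner_sub_left]
      have h2 : ⟪gradient G (x + t • v) - gradient G x, v⟫ ≤ T * t * ‖v‖ ^ 2 := by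
        calc ⟪gradient G (x + t • v) - gradient G x, v⟫
            ≤ ‖gradient G (x + t • v) - gradient G x‖ * ‖v‖ := real_inner_le_norm _ _
          _ ≤ (T * ‖(x + t • v) - x‖) * ‖v‖ :=
              mul_le_mul_of_nonneg_right (hlip _ _) (norm_nonneg _)
          _ = T * t * ‖v‖ ^ 2 := by
              rw [add_sub_cancel_left, norm_smul, Real.norm_eq_abs,
                abs_of_nonneg ht.1]
              ring
      linarith [h1 ▸ h2]
  have hval : ∫ t in (0:ℝ)..1, (⟪gradient G x, v⟫ + T * t * ‖v‖ ^ 2)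
      = ⟪gradient G x, v⟫ + T / 2 * ‖v‖ ^ 2 := by
    rw [intervalIntegral.integral_add intervalIntegrable_const
      (hc.intervalIntegrable _ _)]
    simp only [intervalIntegral.integral_const, smul_eq_mul]
    have : ∫ t in (0:ℝ)..1, T * t * ‖v‖ ^ 2 = T / 2 * ‖v‖ ^ 2 := by
      have : (fun t : ℝ => T * t * ‖v‖ ^ 2) = fun t : ℝ => (T * ‖v‖ ^ 2) * t := by
        funext t; ring
      rw [this, intervalIntegral.integral_const_mul, integral_id]
      ring
    rw [this]; ring
  linarith [heq ▸ (hval ▸ hbound)]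

/-- Lemma 6 of the paper, with the duality gap written in its primal form. -/
theorem adsgd_lemma6 {d n : ℕ}
    (A : EuclideanSpace ℝ (Fin d) →ₗ[ℝ] EuclideanSpace ℝ (Fin n))
    (G : EuclideanSpace ℝ (Fin n) → ℝ) (hGdiff : Differentiable ℝ G) (T : ℝ)
    (hlip : ∀ y y', ‖gradient G y - gradient G y'‖ ≤ T * ‖y - y'‖)
    (Ω : EuclideanSpace ℝ (Fin d) → ℝ) (hΩ : ConvexOn ℝ Set.univ Ω)
    (P : EuclideanSpace ℝ (Fin d) → ℝ) (hP : P = fun x => G (A x) + Ω x)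
    (xstar : EuclideanSpace ℝ (Fin d)) (hmin : ∀ y, P xstar ≤ P y)
    (xh u : EuclideanSpace ℝ (Fin d)) (s : ℝ) (hs0 : 0 ≤ s) (hs1 : s ≤ 1) :
    P xh - P xstar ≥
      s * (Ω xh - Ω u - ⟪gradient G (A xh), A (u - xh)⟫)
        - (T * s ^ 2 / 2) * ‖A (u - xh)‖ ^ 2 := by
  set xs := xh + s • (u - xh) with hxs
  have hG : G (A xs) ≤ G (A xh) + s * ⟪gradient G (A xh), A (u - xh)⟫
      + T / 2 * s ^ 2 * ‖A (u - xh)‖ ^ 2 := by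
    have := descent_lemma G hGdiff T hlip (A xh) (s • A (u - xh))
    have hmap : A xs = A xh + s • A (u - xh) := by
      simp [hxs, map_add, map_smul]
    rw [hmap]
    calc G (A xh + s • A (u - xh))
        ≤ G (A xh) + ⟪gradient G (A xh), s • A (u - xh)⟫
            + T / 2 * ‖s • A (u - xh)‖ ^ 2 := this
      _ = G (A xh) + s * ⟪gradient G (A xh), A (u - xh)⟫
            + T / 2 * s ^ 2 * ‖A (u - xh)‖ ^ 2 := by
          rw [real_inner_smul_right, norm_smul, Real.norm_eq_abs, mul_pow,
            sq_abs]
          ring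
  have hΩs : Ω xs ≤ (1 - s) * Ω xh + s * Ω u := by
    have := hΩ.2 (Set.mem_univ xh) (Set.mem_univ u) (by linarith : (0:ℝ) ≤ 1 - s)
      hs0 (by ring : (1 - s) + s = 1)
    have hx : (1 - s) • xh + s • u = xs := by
      simp only [hxs, smul_sub, sub_smul, one_smul]
      abel
    rwa [hx] at this
  have hPs := hmin xs
  rw [hP] at hPs ⊢
  simp only at hPs ⊢
  nlinarith [hG, hΩs, hPs]
end

section
/- Let A : ℝᵈ → ℝⁿ be a linear map between Euclidean spaces, G : ℝⁿ → ℝ differentiable with T-Lipschitz gradient (T > 0), Ω : ℝᵈ → ℝ convex, P(x) = G(A x) + Ω(x), and let x* be a minimizer of P. Let x̂, u ∈ ℝᵈ and R > 0 satisfy ‖A(u − x̂)‖ ≤ R, and suppose P(x̂) − P(x*) ≤ T R² / 2. Then Ω(x̂) − Ω(u) − ⟨∇G(A x̂), A(u − x̂)⟩ ≤ √(2 T R² (P(x̂) − P(x*))). -/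
open RealInnerProductSpace Finset

lemma adsgd_descent {n : ℕ}
    (G : EuclideanSpace ℝ (Fin n) → ℝ) (hGdiff : Differentiable ℝ G)
    (T : ℝ)
    (hlip : ∀ y y', ‖gradient G y - gradient G y'‖ ≤ T * ‖y - y'‖)
    (y0 w : EuclideanSpace ℝ (Fin n)) (s : ℝ) (hs0 : 0 ≤ s) (hs1 : s ≤ 1) :
    G (y0 + s • w) ≤ G y0 + s * ⟪gradient G y0, w⟫ + T * s ^ 2 * ‖w‖ ^ 2 / 2 := by
  set f : ℝ → ℝ := fun t => G (y0 + t • w) with hf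
  have key : ∀ t : ℝ, HasDerivAt f (⟪gradient G (y0 + t • w), w⟫) t := by
    intro t
    have h1 : HasDerivAt (fun t : ℝ => y0 + t • w) w t :=
      by simpa using ((hasDerivAt_id t).smul_const w).const_add y0
    have h2 := ((hGdiff (y0 + t • w)).hasGradientAt).hasFDerivAt
    have := h2.comp_hasDerivAt t h1
    have h4 : HasDerivAt f
        (((InnerProductSpace.toDual ℝ (EuclideanSpace ℝ (Fin n))) (gradient G (y0 + t • w))) w) t := this
    rwa [InnerProductSpace.toDual_apply_apply] at h4
  set c : ℝ := ‖w‖ ^ 2 with hc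
  set g0 : ℝ := ⟪gradient G y0, w⟫ with hg0
  set h : ℝ → ℝ := fun t => f t - t * g0 - T * c / 2 * t ^ 2 with hh
  have hderiv : ∀ t : ℝ, HasDerivAt h (⟪gradient G (y0 + t • w), w⟫ - g0 - T * c * t) t := by
    intro t
    have := ((key t).sub ((hasDerivAt_id t).mul_const g0)).sub
      (((hasDerivAt_pow 2 t)).const_mul (T * c / 2))
    convert this using 1
    · rfl
    · rfl
    · rfl
    · simp; ring
  have hanti : AntitoneOn h (Set.Icc 0 1) := by
    apply antitoneOn_of_deriv_nonpos (convex_Icc 0 1)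
    · exact (Differentiable.continuous (fun t => (hderiv t).differentiableAt)).continuousOn
    · intro t ht
      exact ((hderiv t).differentiableAt).differentiableWithinAt
    · intro t ht
      rw [interior_Icc] at ht
      rw [(hderiv t).deriv]
      have hb : ⟪gradient G (y0 + t • w) - gradient G y0, w⟫ ≤ T * c * t := by
        calc ⟪gradient G (y0 + t • w) - gradient G y0, w⟫
            ≤ ‖gradient G (y0 + t • w) - gradient G y0‖ * ‖w‖ := real_inner_le_norm _ _
          _ ≤ (T * ‖(y0 + t • w) - y0‖) * ‖w‖ := by
              gcongr; exact hlip _ _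
          _ = T * c * t := by
              rw [add_sub_cancel_left, norm_smul]
              simp [hc, abs_of_pos ht.1]; ring
      rw [inner_sub_left] at hb
      linarith
  have := hanti (Set.left_mem_Icc.mpr zero_le_one) (Set.mem_Icc.mpr ⟨hs0, hs1⟩) hs0
  simp only [hh, hf] at this
  simp only [zero_smul, add_zero, zero_mul, sub_zero, ne_eq, OfNat.ofNat_ne_zero,
    not_false_eq_true, zero_pow, mul_zero] at this
  nlinarith [this]

/-- The key duality-gap bound in the proof of Theorem 2, with the duality gap
written in its primal form. -/
theorem adsgd_gap_bound {d n : ℕ}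
    (A : EuclideanSpace ℝ (Fin d) →ₗ[ℝ] EuclideanSpace ℝ (Fin n))
    (G : EuclideanSpace ℝ (Fin n) → ℝ) (hGdiff : Differentiable ℝ G)
    (T : ℝ) (hT : 0 < T)
    (hlip : ∀ y y', ‖gradient G y - gradient G y'‖ ≤ T * ‖y - y'‖)
    (Ω : EuclideanSpace ℝ (Fin d) → ℝ) (hΩ : ConvexOn ℝ Set.univ Ω)
    (P : EuclideanSpace ℝ (Fin d) → ℝ) (hP : P = fun x => G (A x) + Ω x)
    (xstar : EuclideanSpace ℝ (Fin d)) (hmin : ∀ y, P xstar ≤ P y)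
    (xh u : EuclideanSpace ℝ (Fin d)) (R : ℝ) (hR : 0 < R)
    (hrad : ‖A (u - xh)‖ ≤ R)
    (hsub : P xh - P xstar ≤ T * R ^ 2 / 2) :
    Ω xh - Ω u - ⟪gradient G (A xh), A (u - xh)⟫ ≤
      Real.sqrt (2 * T * R ^ 2 * (P xh - P xstar)) := by
  set v := u - xh with hv
  set Gap : ℝ := Ω xh - Ω u - ⟪gradient G (A xh), A v⟫ with hGap
  set ε : ℝ := P xh - P xstar with hε
  have hε0 : 0 ≤ ε := sub_nonneg.mpr (hmin xh)
  have hAv2 : ‖A v‖ ^ 2 ≤ R ^ 2 := by nlinarith [norm_nonneg (A v)]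
  have hgap : ∀ s : ℝ, 0 < s → s ≤ 1 → s * Gap ≤ ε + T * s ^ 2 * R ^ 2 / 2 := by
    intro s hs hs1
    have hAeq : A (xh + s • v) = A xh + s • (A v) := by
      simp [map_add, map_smul]
    have h1 := adsgd_descent G hGdiff T hlip (A xh) (A v) s hs.le hs1
    have h2 : Ω (xh + s • v) ≤ (1 - s) * Ω xh + s * Ω u := by
      have hxu : xh + s • v = (1 - s) • xh + s • u := by
        rw [hv]; module
      rw [hxu]
      exact hΩ.2 (Set.mem_univ xh) (Set.mem_univ u) (by linarith) hs.le (by ring)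
    have h3 := hmin (xh + s • v)
    have hPa : P (xh + s • v) = G (A xh + s • A v) + Ω (xh + s • v) := by
      rw [hP]; simp [hAeq]
    have hPxh : P xh = G (A xh) + Ω xh := by rw [hP]
    have hεe : ε = P xh - P xstar := hε
    have hTs : 0 ≤ T * s ^ 2 / 2 := by positivity
    rw [hGap]
    nlinarith [h1, h2, h3, hPa, hPxh, hεe, mul_le_mul_of_nonneg_left hAv2 hTs]
  rcases eq_or_lt_of_le hε0 with hze | hpos
  · -- ε = 0
    rw [← hze, mul_zero, Real.sqrt_zero]
    by_contra hG
    push_neg at hG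
    set s : ℝ := min 1 (Gap / (T * R ^ 2)) with hs
    have hsp : 0 < s := lt_min one_pos (by positivity)
    have hs1 : s ≤ 1 := min_le_left _ _
    have hkey := hgap s hsp hs1
    rw [← hze] at hkey
    have hsle : s ≤ Gap / (T * R ^ 2) := min_le_right _ _
    have h4 : s * (T * R ^ 2) ≤ Gap := (le_div_iff₀ (by positivity)).mp hsle
    nlinarith
  · -- ε > 0
    set s : ℝ := Real.sqrt (2 * ε / (T * R ^ 2)) with hs
    have hden : (0:ℝ) < T * R ^ 2 := by positivity
    have hs2 : s ^ 2 = 2 * ε / (T * R ^ 2) := Real.sq_sqrt (by positivity)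
    have hsp : 0 < s := Real.sqrt_pos.mpr (by positivity)
    have hs1 : s ≤ 1 := by
      rw [hs, show (1:ℝ) = Real.sqrt 1 from Real.sqrt_one.symm]
      apply Real.sqrt_le_sqrt
      rw [div_le_one hden]
      rw [hε] at hsub ⊢
      linarith
    have hkey := hgap s hsp hs1
    have hGle : Gap ≤ ε / s + T * s * R ^ 2 / 2 := by
      rw [← mul_le_mul_iff_right₀ hsp]
      calc s * Gap ≤ ε + T * s ^ 2 * R ^ 2 / 2 := hkey
        _ = s * (ε / s + T * s * R ^ 2 / 2) := by field_simp
    have hss : T * R ^ 2 * s ^ 2 = 2 * ε := by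
      rw [hs2]; field_simp
    have hεe2 : ε = T * R ^ 2 * s ^ 2 / 2 := by linarith
    have heq2 : ε / s + T * s * R ^ 2 / 2 = T * R ^ 2 * s := by
      rw [hεe2]; field_simp; ring
    have heq : Real.sqrt (2 * T * R ^ 2 * ε) = T * R ^ 2 * s := by
      rw [hεe2, show 2 * T * R ^ 2 * (T * R ^ 2 * s ^ 2 / 2) = (T * R ^ 2 * s) ^ 2 by ring]
      exact Real.sqrt_sq (by positivity)
    calc Gap ≤ ε / s + T * s * R ^ 2 / 2 := hGle
      _ = T * R ^ 2 * s := heq2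
      _ = Real.sqrt (2 * T * R ^ 2 * ε) := heq.symm
end

section
/- In the block setting on ℝᵈ with q blocks, fix a block j, let λ > 0, let A : ℝᵈ → ℝⁿ be linear, and let G : ℝⁿ → ℝ be differentiable at A x*. For each block k let Ω_k : ℝᵈ → ℝ satisfy Ω_k(x) = Ω_k(proj_k x) and Ω_k(t z) = t Ω_k(z) for all t ≥ 0, with Ω_j(z) > 0 for every z ≠ 0 with proj_j z = z. Suppose x* minimizes P(x) = G(A x) + λ Σ_{k∈Fin q} Ω_k(x) over ℝᵈ, and set θ* = −∇G(A x*) ∈ ℝⁿ. Let θ ∈ ℝⁿ and r ≥ 0 satisfy ‖θ − θ*‖ ≤ r, and let D, M be real numbers such that ⟨θ, A z⟩ ≤ D Ω_j(z) and ‖A z‖ ≤ M Ω_j(z) for every z with proj_j z = z. If D + r M < λ, then proj_j x* = 0. -/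
open RealInnerProductSpace Finset

/-- The gap-safe sphere screening rule (eliminating test (7)) and its safety
(Property 1): if `D + r·M < λ` then block `j` is inactive at the optimum. -/
theorem adsgd_gap_safe_screening {d q n : ℕ} (hd : 0 < d) (hq : 0 < q)
    (β : Fin d → Fin q) (j : Fin q)
    (lam : ℝ) (hlam : 0 < lam)
    (A : EuclideanSpace ℝ (Fin d) →ₗ[ℝ] EuclideanSpace ℝ (Fin n))
    (G : EuclideanSpace ℝ (Fin n) → ℝ)
    (Ωb : Fin q → EuclideanSpace ℝ (Fin d) → ℝ)
    (hblock : ∀ k x, Ωb k x = Ωb k (blockProj β k x))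
    (hhomog : ∀ k (t : ℝ), 0 ≤ t → ∀ z, Ωb k (t • z) = t * Ωb k z)
    (hpos : ∀ z, blockProj β j z = z → z ≠ 0 → 0 < Ωb j z)
    (P : EuclideanSpace ℝ (Fin d) → ℝ)
    (hP : P = fun x => G (A x) + lam * ∑ k, Ωb k x)
    (xstar : EuclideanSpace ℝ (Fin d))
    (hdiff : DifferentiableAt ℝ G (A xstar))
    (hmin : ∀ y, P xstar ≤ P y)
    (θstar : EuclideanSpace ℝ (Fin n)) (hθstar : θstar = -gradient G (A xstar))
    (θ : EuclideanSpace ℝ (Fin n)) (r : ℝ) (hr : 0 ≤ r) (hball : ‖θ - θstar‖ ≤ r)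
    (D M : ℝ)
    (hD : ∀ z, blockProj β j z = z → ⟪θ, A z⟫ ≤ D * Ωb j z)
    (hM : ∀ z, blockProj β j z = z → ‖A z‖ ≤ M * Ωb j z)
    (htest : D + r * M < lam) :
    blockProj β j xstar = 0 := by
  classical
  by_contra hne
  set p := blockProj β j xstar with hpdef
  have hproj : blockProj β j p = p := by
    ext i
    by_cases h : β i = j <;> simp [blockProj, hpdef, h]
  have hΩpos : 0 < Ωb j p := hpos p hproj hne
  -- sum decomposition
  have hterm : ∀ t : ℝ, 0 ≤ t → t ≤ 1 → ∀ k, Ωb k (xstar - t • p)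
      = Ωb k xstar - (if k = j then t * Ωb j p else 0) := by
    intro t ht0 ht1 k
    by_cases hk : k = j
    · subst hk
      have h1 : blockProj β k (xstar - t • p) = (1 - t) • p := by
        ext i
        by_cases h : β i = k <;>
          simp [blockProj, hpdef, h, PiLp.sub_apply, PiLp.smul_apply, smul_eq_mul] <;> ring
      rw [hblock k (xstar - t • p), h1, hhomog k (1 - t) (by linarith) p,
        if_pos rfl, show Ωb k xstar = Ωb k p from hblock k xstar]
      ring
    · simp only [hk, if_false, sub_zero]
      have h1 : blockProj β k (xstar - t • p) = blockProj β k xstar := by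
        ext i
        by_cases h : β i = k
        · have hij : β i ≠ j := fun hh => hk (h.symm.trans hh)
          simp [blockProj, hpdef, h, hij, hk, PiLp.sub_apply, PiLp.smul_apply]
        · simp [blockProj, h]
      rw [hblock k (xstar - t • p), h1, ← hblock k xstar]
  have hsum : ∀ t : ℝ, 0 ≤ t → t ≤ 1 →
      ∑ k, Ωb k (xstar - t • p) = (∑ k, Ωb k xstar) - t * Ωb j p := by
    intro t ht0 ht1
    rw [Finset.sum_congr rfl fun k _ => hterm t ht0 ht1 k, Finset.sum_sub_distrib,
      Finset.sum_ite_eq' Finset.univ j fun _ => t * Ωb j p]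
    simp
  -- minimality gives a difference-quotient bound
  have hquot : ∀ t : ℝ, 0 < t → t ≤ 1 →
      lam * Ωb j p ≤ (G (A xstar - t • A p) - G (A xstar)) / t := by
    intro t ht0 ht1
    have hm := hmin (xstar - t • p)
    rw [hP] at hm
    simp only at hm
    rw [hsum t ht0.le ht1] at hm
    have hA : A (xstar - t • p) = A xstar - t • A p := by
      rw [map_sub, map_smul]
    rw [hA] at hm
    rw [le_div_iff₀ ht0]
    nlinarith [hm]
  -- derivative of t ↦ G (A xstar - t • A p) at 0
  have hline : HasDerivAt (fun t : ℝ => A xstar - t • A p) (-(A p)) 0 := by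
    simpa using (HasDerivAt.const_sub (A xstar) ((hasDerivAt_id (0:ℝ)).smul_const (A p)))
  have hφ : HasDerivAt (fun t : ℝ => G (A xstar - t • A p))
      (fderiv ℝ G (A xstar) (-(A p))) 0 := by
    have hd2 : HasFDerivAt G (fderiv ℝ G (A xstar)) (A xstar - (0:ℝ) • A p) := by
      simpa using hdiff.hasFDerivAt
    exact hd2.comp_hasDerivAt 0 hline
  have hfd : fderiv ℝ G (A xstar) (-(A p)) = ⟪θstar, A p⟫ := by
    rw [hθstar]
    have hg := hdiff.hasGradientAt
    rw [hg.hasFDerivAt.fderiv]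
    simp [real_inner_smul_left, inner_neg_left, inner_neg_right]
  -- pass to the limit along t → 0⁺
  have hkey : lam * Ωb j p ≤ ⟪θstar, A p⟫ := by
    rw [← hfd]
    have hslope : Filter.Tendsto (slope (fun t : ℝ => G (A xstar - t • A p)) 0)
        (nhdsWithin 0 (Set.Ioi 0)) (nhds (fderiv ℝ G (A xstar) (-(A p)))) :=
      ((hasDerivAt_iff_tendsto_slope.mp hφ).mono_left
        (nhdsWithin_mono 0 fun x hx => ne_of_gt hx))
    refine ge_of_tendsto hslope ?_
    filter_upwards [Ioc_mem_nhdsGT_of_mem (Set.mem_Ico.mpr ⟨le_refl (0:ℝ), one_pos⟩)]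
      with t ht
    have := hquot t ht.1 ht.2
    simpa [slope_def_field, div_eq_inv_mul] using this
  -- contradiction with the screening test
  have h1 : ⟪θstar, A p⟫ = ⟪θ, A p⟫ + ⟪θstar - θ, A p⟫ := by
    rw [← inner_add_left]
    congr 1
    abel
  have h2 : ⟪θstar - θ, A p⟫ ≤ r * (M * Ωb j p) := by
    calc ⟪θstar - θ, A p⟫ ≤ ‖θstar - θ‖ * ‖A p‖ := real_inner_le_norm _ _
    _ ≤ r * (M * Ωb j p) := by
        have h3 : ‖θstar - θ‖ ≤ r := by rwa [norm_sub_rev]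
        exact mul_le_mul h3 (hM p hproj) (norm_nonneg _) hr
  have h4 : ⟪θ, A p⟫ ≤ D * Ωb j p := hD p hproj
  nlinarith [hkey, hΩpos, mul_lt_mul_of_pos_right htest hΩpos]
end
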